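/- The abstract successor function is injective: for a word σ over a pushdown alphabet, if SUCC(abs, σ, i) = SUCC(abs, σ, i') and both are defined, then i = i'. -/

import Mathlib

inductive SymKind where
  | call | ret | intl
deriving DecidableEq

/-- Well-matched words over a pushdown alphabet, where `k` assigns to each
letter its kind (call, return, or internal). -/
inductive WellMatched {A : Type*} (k : A → SymKind) : List A → Prop
  | nil : WellMatched k []
  | int {a : A} {s : List A} : k a = SymKind.intl → WellMatched k s →
      WellMatched k (a :: s)
  | matched {c r : A} {s s' : List A} : k c = SymKind.call → k r = SymKind.ret →
      WellMatched k s → WellMatched k s' →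
      WellMatched k (c :: (s ++ r :: s'))

/-- Number of call symbols in a finite word. -/
def callCount {A : Type*} (k : A → SymKind) (s : List A) : ℕ :=
  s.countP (fun a => decide (k a = SymKind.call))

/-- Number of return symbols in a finite word. -/
def retCount {A : Type*} (k : A → SymKind) (s : List A) : ℕ :=
  s.countP (fun a => decide (k a = SymKind.ret))

/-- The finite subword `σ[i, j-1]` of the infinite word `σ` (letters at
positions `i, i+1, ..., j-1`). -/
def wordSlice {A : Type*} (σ : ℕ → A) (i j : ℕ) : List A :=
  (List.range (j - i)).map fun n => σ (i + n)

/-- `j` is a matching return of position `i`: `j > i`, `j` is a return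
position, and the subword `σ[i+1, j-1]` is well-matched. -/
def MatchRet {A : Type*} (k : A → SymKind) (σ : ℕ → A) (i j : ℕ) : Prop :=
  i < j ∧ k (σ j) = SymKind.ret ∧ WellMatched k (wordSlice σ (i + 1) j)

/-- The abstract-successor relation `SUCC(abs, σ, i) = j`. -/
def AbsSucc {A : Type*} (k : A → SymKind) (σ : ℕ → A) (i j : ℕ) : Prop :=
  if k (σ i) = SymKind.call then MatchRet k σ i j
  else j = i + 1 ∧ k (σ (i + 1)) ≠ SymKind.ret

/-- `j` is a candidate caller of `i`: a call position `j < i` whose abstract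
successor is undefined or greater than `i`. -/
def CallerCand {A : Type*} (k : A → SymKind) (σ : ℕ → A) (i j : ℕ) : Prop :=
  j < i ∧ k (σ j) = SymKind.call ∧ ∀ m, AbsSucc k σ j m → i < m

/-- `j` is the caller of `i`: the greatest candidate caller. -/
def Caller {A : Type*} (k : A → SymKind) (σ : ℕ → A) (i j : ℕ) : Prop :=
  CallerCand k σ i j ∧ ∀ j', CallerCand k σ i j' → j' ≤ j

/-- `S` is a maximal abstract path (MAP): the set of positions reachable via
the abstract successor from a position `i0` with no abstract predecessor. -/
def IsMAP {A : Type*} (k : A → SymKind) (σ : ℕ → A) (S : Set ℕ) : Prop :=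
  ∃ i0, (¬ ∃ p, AbsSucc k σ p i0) ∧
    S = {j | Relation.ReflTransGen (AbsSucc k σ) i0 j}

/-- The set of positions of the (unique) maximal abstract path visiting `i`. -/
def PosA {A : Type*} (k : A → SymKind) (σ : ℕ → A) (i : ℕ) : Set ℕ :=
  {j | Relation.ReflTransGen (AbsSucc k σ) i j ∨
       Relation.ReflTransGen (AbsSucc k σ) j i}

/-- The set of positions of the caller path of `σ` from `i`. -/
def PosC {A : Type*} (k : A → SymKind) (σ : ℕ → A) (i : ℕ) : Set ℕ :=
  {j | Relation.ReflTransGen (fun a b => Caller k σ a b) i j}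

/-! If two calls `i < i'` had the same matching return `j`, the well-matched slice `σ[i+1, j-1]`
would read `p ++ σ i' :: r` with `r` well-matched as well. A prefix of a well-matched word never
contains more returns than calls, so `p ++ [σ i']` has strictly more calls than returns, and the
balanced `r` cannot make up for it. A non-call position has successor `i + 1`, which is not a
return, so it never collides with a call's successor. -/

section WellMatched

variable {A : Type*} {k : A → SymKind}

@[simp]
theorem callCount_nil : callCount k [] = 0 :=
  rfl

@[simp]
theorem retCount_nil : retCount k [] = 0 :=
  rfl

@[simp]
theorem callCount_cons (a : A) (s : List A) :
    callCount k (a :: s) = callCount k s + if k a = SymKind.call then 1 else 0 := by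
  simp [callCount, List.countP_cons]

@[simp]
theorem retCount_cons (a : A) (s : List A) :
    retCount k (a :: s) = retCount k s + if k a = SymKind.ret then 1 else 0 := by
  simp [retCount, List.countP_cons]

@[simp]
theorem callCount_append (s t : List A) :
    callCount k (s ++ t) = callCount k s + callCount k t :=
  List.countP_append

@[simp]
theorem retCount_append (s t : List A) :
    retCount k (s ++ t) = retCount k s + retCount k t :=
  List.countP_append

theorem WellMatched.callCount_eq_retCount {w : List A} (hw : WellMatched k w) :
    callCount k w = retCount k w := by
  induction hw with
  | nil => rfl
  | int ha _ ih => simp [ha, ih]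
  | matched hc hr _ _ ih ih' =>
    simp [hc, hr, ih, ih']
    omega

theorem WellMatched.retCount_take_le_callCount_take {w : List A} (hw : WellMatched k w) (n : ℕ) :
    retCount k (w.take n) ≤ callCount k (w.take n) := by
  induction hw generalizing n with
  | nil => simp
  | int ha _ ih =>
    cases n with
    | zero => simp
    | succ n => simpa [ha] using ih n
  | @matched c r s s' hc hr hs _ ih ih' =>
    cases n with
    | zero => simp
    | succ n =>
      rw [List.take_succ_cons, List.take_append]
      rcases hn : n - s.length with _ | m
      · simpa [hc] using (ih n).trans (Nat.le_succ _)
      · rw [List.take_succ_cons, List.take_of_length_le (by omega)]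
        have := hs.callCount_eq_retCount
        have := ih' m
        simp [hc, hr]
        omega

theorem WellMatched.retCount_le_callCount_of_prefix {w p : List A} (hw : WellMatched k w)
    (hp : p <+: w) : retCount k p ≤ callCount k p := by
  rw [List.prefix_iff_eq_take.mp hp]
  exact hw.retCount_take_le_callCount_take _

theorem WellMatched.not_wellMatched_of_append_call {p r : List A} {c : A}
    (hw : WellMatched k (p ++ c :: r)) (hc : k c = SymKind.call) : ¬ WellMatched k r := by
  intro hr
  have hp := hw.retCount_le_callCount_of_prefix (List.prefix_append p (c :: r))
  have hw := hw.callCount_eq_retCount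
  have hr := hr.callCount_eq_retCount
  simp [hc] at hw hp
  omega

end WellMatched

theorem wordSlice_eq_append_cons {A : Type*} (σ : ℕ → A) {i m j : ℕ} (him : i ≤ m)
    (hmj : m < j) :
    wordSlice σ i j = wordSlice σ i m ++ σ m :: wordSlice σ (m + 1) j := by
  obtain ⟨a, rfl⟩ := Nat.exists_eq_add_of_le him
  obtain ⟨b, rfl⟩ := Nat.exists_eq_add_of_lt hmj
  simp only [wordSlice, show i + a + b + 1 - i = a + (b + 1) by omega,
    show i + a + b + 1 - (i + a + 1) = b by omega, Nat.add_sub_cancel_left,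
    List.range_add, List.range_succ_eq_map, List.map_append, List.map_cons, List.map_map]
  simp [Function.comp_def, Nat.add_assoc, Nat.add_comm 1]

theorem MatchRet.le_of_call {A : Type*} {k : A → SymKind} {σ : ℕ → A} {i i' j : ℕ}
    (h : MatchRet k σ i j) (h' : MatchRet k σ i' j) (hc' : k (σ i') = SymKind.call) :
    i' ≤ i := by
  by_contra! hlt
  obtain ⟨-, -, hw⟩ := h
  rw [wordSlice_eq_append_cons σ hlt h'.1] at hw
  exact hw.not_wellMatched_of_append_call hc' h'.2.2

/-- the abstract successor function is injective. -/
theorem absSucc_injective {A : Type*} (k : A → SymKind) (σ : ℕ → A)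
    {i i' j : ℕ} (h : AbsSucc k σ i j) (h' : AbsSucc k σ i' j) :
    i = i' := by
  unfold AbsSucc at h h'
  split_ifs at h h' with hc hc'
  · exact le_antisymm (h'.le_of_call h hc) (h.le_of_call h' hc')
  · exact absurd h.2.1 (h'.1 ▸ h'.2)
  · exact absurd h'.2.1 (h.1 ▸ h.2)
  · omega
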